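/- If Y is a cluster of every tree in a profile P of rooted phylogenetic trees on X, then Y is a cluster of the Adams consensus φ_Ad(P), and moreover φ_Ad(P)|_Y = φ_Ad(P|_Y). -/

import Mathlib

/-- A (candidate) rooted phylogenetic tree, encoded by its set of clusters. -/
abbrev PTree : Type := Finset (Finset ℕ)

/-- Two clusters are nested: disjoint or one contained in the other. -/
abbrev Nested (C D : Finset ℕ) : Prop := C ∩ D = ∅ ∨ C ⊆ D ∨ D ⊆ C

/-- `H` is a hierarchy on leaf set `X`: a rooted phylogenetic tree in `RP(X)`. -/
structure IsHierarchy (X : Finset ℕ) (H : PTree) : Prop where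
  subset_top : ∀ C ∈ H, C ⊆ X
  cluster_nonempty : ∀ C ∈ H, C.Nonempty
  top_mem : X ∈ H
  singleton_mem : ∀ x ∈ X, ({x} : Finset ℕ) ∈ H
  laminar : ∀ C ∈ H, ∀ D ∈ H, Nested C D

/-- Restriction `T|_Y` of a tree to a subset `Y` of the leaves. -/
def restrictT (H : PTree) (Y : Finset ℕ) : PTree :=
  (H.image (fun C => C ∩ Y)).filter (fun C => C.Nonempty)

/-- The maximal proper clusters of a tree on leaf set `X`. -/
def maxProper (X : Finset ℕ) (T : PTree) : PTree :=
  T.filter (fun C => C ≠ X ∧ ∀ D ∈ T, C ⊂ D → D = X)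

/-- Common refinement of two collections of blocks. -/
def meet2 (π π' : Finset (Finset ℕ)) : Finset (Finset ℕ) :=
  ((π ×ˢ π').image (fun p => p.1 ∩ p.2)).filter (fun B => B.Nonempty)

/-- Common refinement of a list of collections of blocks. -/
def meetAll : List (Finset (Finset ℕ)) → Finset (Finset ℕ)
  | [] => ∅
  | π :: L => L.foldl meet2 π

/-- Adams consensus, with fuel: the maximal proper clusters of the output are
the nonempty intersections of one maximal proper cluster from each input tree
(the common refinement of the top partitions), and the construction recurses on
each such block with the restricted profile. -/
def adamsAux : ℕ → Finset ℕ → List PTree → PTree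
  | 0, X, _ => {X}
  | n + 1, X, P =>
      let B := (meetAll (P.map (maxProper X))).filter (fun A => A ⊂ X)
      insert X (B.biUnion (fun A => adamsAux n A (P.map (fun T => restrictT T A))))

/-- Adams consensus of a profile of trees on leaf set `X`. -/
def adams (X : Finset ℕ) (P : List PTree) : PTree := adamsAux X.card X P


section AdamsAux

/-! ### Basic lemmas about restriction -/

lemma mem_restrictT {H : PTree} {Y D : Finset ℕ} :
    D ∈ restrictT H Y ↔ (∃ C ∈ H, C ∩ Y = D) ∧ D.Nonempty := by
  simp [restrictT]

lemma IsHierarchy.X_nonempty {X : Finset ℕ} {T : PTree} (h : IsHierarchy X T) :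
    X.Nonempty := h.cluster_nonempty X h.top_mem

lemma restrict_hierarchy {X A : Finset ℕ} {T : PTree} (h : IsHierarchy X T)
    (hA : A ⊆ X) (hAne : A.Nonempty) : IsHierarchy A (restrictT T A) where
  subset_top := by
    intro C hC
    obtain ⟨⟨D, _, rfl⟩, _⟩ := mem_restrictT.1 hC
    exact Finset.inter_subset_right
  cluster_nonempty := fun C hC => (mem_restrictT.1 hC).2
  top_mem := mem_restrictT.2 ⟨⟨X, h.top_mem, Finset.inter_eq_right.2 hA⟩, hAne⟩
  singleton_mem := by
    intro x hx
    refine mem_restrictT.2 ⟨⟨{x}, h.singleton_mem x (hA hx), ?_⟩, Finset.singleton_nonempty x⟩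
    exact Finset.inter_eq_left.2 (Finset.singleton_subset_iff.2 hx)
  laminar := by
    intro C hC D hD
    obtain ⟨⟨C', hC', rfl⟩, _⟩ := mem_restrictT.1 hC
    obtain ⟨⟨D', hD', rfl⟩, _⟩ := mem_restrictT.1 hD
    rcases h.laminar C' hC' D' hD' with h1 | h1 | h1
    · left
      apply Finset.subset_empty.1
      rw [← h1]
      intro x hx
      simp only [Finset.mem_inter] at hx ⊢
      tauto
    · right; left; exact Finset.inter_subset_inter h1 subset_rfl
    · right; right; exact Finset.inter_subset_inter h1 subset_rfl

lemma restrict_restrict {T : PTree} {A Y : Finset ℕ} (h : Y ⊆ A) :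
    restrictT (restrictT T A) Y = restrictT T Y := by
  have hAY : A ∩ Y = Y := Finset.inter_eq_right.2 h
  ext D
  simp only [mem_restrictT]
  constructor
  · rintro ⟨⟨C, ⟨⟨C', hC', rfl⟩, _⟩, rfl⟩, hDne⟩
    exact ⟨⟨C', hC', by rw [Finset.inter_assoc, hAY]⟩, hDne⟩
  · rintro ⟨⟨C', hC', rfl⟩, hDne⟩
    refine ⟨⟨C' ∩ A, ⟨⟨C', hC', rfl⟩, ?_⟩, by rw [Finset.inter_assoc, hAY]⟩, hDne⟩
    exact hDne.mono (Finset.inter_subset_inter subset_rfl h)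

lemma restrict_self {H : PTree} {Y : Finset ℕ} (h1 : ∀ C ∈ H, C ⊆ Y)
    (h2 : ∀ C ∈ H, C.Nonempty) : restrictT H Y = H := by
  ext D
  rw [mem_restrictT]
  constructor
  · rintro ⟨⟨C, hC, rfl⟩, _⟩
    rwa [Finset.inter_eq_left.2 (h1 C hC)]
  · intro hD
    exact ⟨⟨D, hD, Finset.inter_eq_left.2 (h1 D hD)⟩, h2 D hD⟩

lemma restrict_insert {X Y : Finset ℕ} {S : PTree} (h : (X ∩ Y).Nonempty) :
    restrictT (insert X S) Y = insert (X ∩ Y) (restrictT S Y) := by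
  ext D
  simp only [mem_restrictT, Finset.mem_insert]
  constructor
  · rintro ⟨⟨C, rfl | hC, rfl⟩, hne⟩
    · exact Or.inl rfl
    · exact Or.inr ⟨⟨C, hC, rfl⟩, hne⟩
  · rintro (rfl | ⟨⟨C, hC, rfl⟩, hne⟩)
    · exact ⟨⟨X, Or.inl rfl, rfl⟩, h⟩
    · exact ⟨⟨C, Or.inr hC, rfl⟩, hne⟩

lemma restrict_biUnion {s : Finset (Finset ℕ)} {f : Finset ℕ → PTree} {Y : Finset ℕ} :
    restrictT (s.biUnion f) Y = s.biUnion (fun a => restrictT (f a) Y) := by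
  ext D
  simp only [mem_restrictT, Finset.mem_biUnion]
  constructor
  · rintro ⟨⟨C, ⟨a, ha, hC⟩, rfl⟩, hne⟩
    exact ⟨a, ha, ⟨C, hC, rfl⟩, hne⟩
  · rintro ⟨a, ha, ⟨C, hC, rfl⟩, hne⟩
    exact ⟨⟨C, ⟨a, ha, hC⟩, rfl⟩, hne⟩

lemma restrict_eq_empty {H : PTree} {Y : Finset ℕ} (h : ∀ C ∈ H, C ∩ Y = ∅) :
    restrictT H Y = ∅ := by
  ext D
  simp only [mem_restrictT, Finset.notMem_empty, iff_false, not_and]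
  rintro ⟨C, hC, rfl⟩
  rw [h C hC]
  exact Finset.not_nonempty_empty

/-! ### Lemmas about `meet2` / `meetAll` -/

lemma mem_meet2 {π π' : Finset (Finset ℕ)} {B : Finset ℕ} :
    B ∈ meet2 π π' ↔ (∃ C ∈ π, ∃ C' ∈ π', C ∩ C' = B) ∧ B.Nonempty := by
  simp only [meet2, Finset.mem_filter, Finset.mem_image, Finset.mem_product, Prod.exists]
  tauto

lemma foldl_meet2_nonempty : ∀ (L : List (Finset (Finset ℕ))) (π : Finset (Finset ℕ)),
    (∀ b ∈ π, b.Nonempty) → ∀ B ∈ L.foldl meet2 π, B.Nonempty := by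
  intro L
  induction L with
  | nil => exact fun π hπ B hB => hπ B hB
  | cons π' L ih =>
    intro π hπ B hB
    exact ih (meet2 π π') (fun b hb => (mem_meet2.1 hb).2) B hB

lemma foldl_meet2_head : ∀ (L : List (Finset (Finset ℕ))) (π : Finset (Finset ℕ))
    (B : Finset ℕ), B ∈ L.foldl meet2 π → ∃ C ∈ π, B ⊆ C := by
  intro L
  induction L with
  | nil => exact fun π B hB => ⟨B, hB, subset_rfl⟩
  | cons π' L ih =>
    intro π B hB
    obtain ⟨C, hC, hBC⟩ := ih (meet2 π π') B hB
    obtain ⟨⟨D, hD, D', hD', rfl⟩, _⟩ := mem_meet2.1 hC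
    exact ⟨D, hD, hBC.trans Finset.inter_subset_left⟩

lemma foldl_meet2_superset : ∀ (L : List (Finset (Finset ℕ))) (π : Finset (Finset ℕ))
    (Y : Finset ℕ), (∀ C ∈ π, (C ∩ Y).Nonempty → Y ⊆ C) →
    (∀ π' ∈ L, ∀ C ∈ π', (C ∩ Y).Nonempty → Y ⊆ C) →
    ∀ B ∈ L.foldl meet2 π, (B ∩ Y).Nonempty → Y ⊆ B := by
  intro L
  induction L with
  | nil => exact fun π Y hπ _ B hB h => hπ B hB h
  | cons π' L ih =>
    intro π Y hπ hL B hB h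
    refine ih (meet2 π π') Y ?_ (fun p hp => hL p (List.mem_cons_of_mem _ hp)) B hB h
    intro C hC hCY
    obtain ⟨⟨D, hD, D', hD', rfl⟩, _⟩ := mem_meet2.1 hC
    have h1 : Y ⊆ D :=
      hπ D hD (hCY.mono (Finset.inter_subset_inter Finset.inter_subset_left subset_rfl))
    have h2 : Y ⊆ D' :=
      hL π' (List.mem_cons_self) D' hD'
        (hCY.mono (Finset.inter_subset_inter Finset.inter_subset_right subset_rfl))
    exact Finset.subset_inter h1 h2

lemma foldl_meet2_exists : ∀ (L : List (Finset (Finset ℕ))) (π : Finset (Finset ℕ))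
    (Y : Finset ℕ), Y.Nonempty → (∃ C ∈ π, Y ⊆ C) → (∀ π' ∈ L, ∃ C ∈ π', Y ⊆ C) →
    ∃ B ∈ L.foldl meet2 π, Y ⊆ B := by
  intro L
  induction L with
  | nil => exact fun π Y _ hπ _ => hπ
  | cons π' L ih =>
    intro π Y hY hπ hL
    obtain ⟨C, hC, hYC⟩ := hπ
    obtain ⟨C', hC', hYC'⟩ := hL π' (List.mem_cons_self)
    refine ih (meet2 π π') Y hY
      ⟨C ∩ C', mem_meet2.2 ⟨⟨C, hC, C', hC', rfl⟩, hY.mono (Finset.subset_inter hYC hYC')⟩,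
        Finset.subset_inter hYC hYC'⟩
      (fun p hp => hL p (List.mem_cons_of_mem _ hp))

/-! ### Lemmas about `maxProper` -/

lemma mem_maxProper {X C : Finset ℕ} {T : PTree} :
    C ∈ maxProper X T ↔ C ∈ T ∧ C ≠ X ∧ ∀ D ∈ T, C ⊂ D → D = X := by
  simp [maxProper, and_assoc]

lemma exists_maxProper_supset {X Y : Finset ℕ} {T : PTree} (_h : IsHierarchy X T)
    (hY : Y ∈ T) (hYX : Y ≠ X) : ∃ M ∈ maxProper X T, Y ⊆ M := by
  have hne : (T.filter (fun C => Y ⊆ C ∧ C ≠ X)).Nonempty :=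
    ⟨Y, Finset.mem_filter.2 ⟨hY, subset_rfl, hYX⟩⟩
  obtain ⟨M, hM', hmax'⟩ := Finset.exists_maximal hne
  have hM : M ∈ T.filter (fun C => Y ⊆ C ∧ C ≠ X) := hM'
  have hmax : ∀ x ∈ T.filter (fun C => Y ⊆ C ∧ C ≠ X), ¬ M < x :=
    fun x hx hlt => hlt.not_ge (hmax' hx hlt.le)
  rw [Finset.mem_filter] at hM
  refine ⟨M, mem_maxProper.2 ⟨hM.1, hM.2.2, ?_⟩, hM.2.1⟩
  intro D hD hMD
  by_contra hDX
  exact hmax D (Finset.mem_filter.2 ⟨hD, hM.2.1.trans hMD.subset, hDX⟩) hMD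

lemma maxProper_superset {X Y C : Finset ℕ} {T : PTree} (hhier : IsHierarchy X T)
    (hY : Y ∈ T) (hYX : Y ≠ X) (hC : C ∈ maxProper X T) (hne : (C ∩ Y).Nonempty) :
    Y ⊆ C := by
  obtain ⟨hCT, hCX, hmax⟩ := mem_maxProper.1 hC
  rcases hhier.laminar C hCT Y hY with h1 | h1 | h1
  · rw [h1] at hne
    exact absurd hne Finset.not_nonempty_empty
  · by_cases hCY : C = Y
    · exact hCY.ge
    · exact absurd (hmax Y hY (Finset.ssubset_iff_subset_ne.2 ⟨h1, hCY⟩)) hYX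
  · exact h1

/-! ### The blocks of the top partition of the Adams consensus -/

def blocksOf (X : Finset ℕ) (P : List PTree) : Finset (Finset ℕ) :=
  (meetAll (P.map (maxProper X))).filter (fun A => A ⊂ X)

lemma adamsAux_succ (n : ℕ) (X : Finset ℕ) (P : List PTree) :
    adamsAux (n + 1) X P =
      insert X ((blocksOf X P).biUnion
        (fun A => adamsAux n A (P.map (fun T => restrictT T A)))) := rfl

lemma top_mem_adamsAux : ∀ (n : ℕ) (X : Finset ℕ) (P : List PTree), X ∈ adamsAux n X P
  | 0, X, P => by simp [adamsAux]
  | n + 1, X, P => by rw [adamsAux_succ]; exact Finset.mem_insert_self _ _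

lemma blocks_ssubset {X : Finset ℕ} {P : List PTree} {A : Finset ℕ}
    (hA : A ∈ blocksOf X P) : A ⊂ X := (Finset.mem_filter.1 hA).2

lemma blocks_nonempty {X : Finset ℕ} {P : List PTree} (hP : P ≠ [])
    (hh : ∀ T ∈ P, IsHierarchy X T) {A : Finset ℕ} (hA : A ∈ blocksOf X P) :
    A.Nonempty := by
  obtain ⟨T₀, Ps, rfl⟩ := List.exists_cons_of_ne_nil hP
  have hA' : A ∈ (Ps.map (maxProper X)).foldl meet2 (maxProper X T₀) :=
    (Finset.mem_filter.1 hA).1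
  exact foldl_meet2_nonempty _ _
    (fun b hb => (hh T₀ (List.mem_cons_self)).cluster_nonempty b (mem_maxProper.1 hb).1)
    A hA'

lemma hierarchies_restrict {X A : Finset ℕ} {P : List PTree}
    (hh : ∀ T ∈ P, IsHierarchy X T) (hA : A ⊆ X) (hAne : A.Nonempty) :
    ∀ T' ∈ P.map (fun T => restrictT T A), IsHierarchy A T' := by
  intro T' hT'
  obtain ⟨T, hT, rfl⟩ := List.mem_map.1 hT'
  exact restrict_hierarchy (hh T hT) hA hAne

/-- Every cluster of the Adams consensus is a nonempty subset of the leaf set. -/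
lemma adamsAux_mem_subset : ∀ (n : ℕ) (X : Finset ℕ) (P : List PTree), P ≠ [] →
    (∀ T ∈ P, IsHierarchy X T) → ∀ C ∈ adamsAux n X P, C ⊆ X ∧ C.Nonempty := by
  intro n
  induction n with
  | zero =>
    intro X P hP hh C hC
    obtain ⟨T₀, Ps, rfl⟩ := List.exists_cons_of_ne_nil hP
    have hXne : X.Nonempty := (hh T₀ (List.mem_cons_self)).X_nonempty
    simp only [adamsAux, Finset.mem_singleton] at hC
    subst hC
    exact ⟨subset_rfl, hXne⟩
  | succ n ih =>
    intro X P hP hh C hC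
    obtain ⟨T₀, Ps, hPe⟩ := List.exists_cons_of_ne_nil hP
    have hXne : X.Nonempty := (hh T₀ (hPe ▸ List.mem_cons_self)).X_nonempty
    rw [adamsAux_succ, Finset.mem_insert] at hC
    rcases hC with rfl | hC
    · exact ⟨subset_rfl, hXne⟩
    · obtain ⟨A, hA, hC⟩ := Finset.mem_biUnion.1 hC
      have hAX : A ⊂ X := blocks_ssubset hA
      have hAne : A.Nonempty := blocks_nonempty hP hh hA
      have := ih A (P.map (fun T => restrictT T A)) (by simp [hP])
        (hierarchies_restrict hh hAX.subset hAne) C hC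
      exact ⟨this.1.trans hAX.subset, this.2⟩

/-! ### Fuel invariance -/

lemma adamsAux_fuel_succ : ∀ (n : ℕ) (X : Finset ℕ) (P : List PTree), P ≠ [] →
    (∀ T ∈ P, IsHierarchy X T) → X.card ≤ n → adamsAux n X P = adamsAux (n + 1) X P := by
  intro n
  induction n with
  | zero =>
    intro X P hP hh hcard
    obtain ⟨T₀, Ps, rfl⟩ := List.exists_cons_of_ne_nil hP
    have hXne : X.Nonempty := (hh T₀ (List.mem_cons_self)).X_nonempty
    have h0 := hXne.card_pos
    exact absurd hcard (by omega)
  | succ n ih =>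
    intro X P hP hh hcard
    rw [adamsAux_succ, adamsAux_succ]
    congr 1
    apply Finset.biUnion_congr rfl
    intro A hA
    have hAX : A ⊂ X := blocks_ssubset hA
    have hAne : A.Nonempty := blocks_nonempty hP hh hA
    have hcA : A.card ≤ n := by
      have := Finset.card_lt_card hAX
      omega
    exact ih A (P.map (fun T => restrictT T A)) (by simp [hP])
      (hierarchies_restrict hh hAX.subset hAne) hcA

lemma adamsAux_fuel_add : ∀ (k n : ℕ) (X : Finset ℕ) (P : List PTree), P ≠ [] →
    (∀ T ∈ P, IsHierarchy X T) → X.card ≤ n → adamsAux (n + k) X P = adamsAux n X P := by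
  intro k
  induction k with
  | zero => intro n X P _ _ _; rfl
  | succ k ih =>
    intro n X P hP hh hcard
    have h1 : adamsAux (n + k) X P = adamsAux (n + k + 1) X P :=
      adamsAux_fuel_succ (n + k) X P hP hh (by omega)
    rw [show n + (k + 1) = n + k + 1 from rfl, ← h1, ih n X P hP hh hcard]

lemma adamsAux_fuel_eq {m n : ℕ} {X : Finset ℕ} {P : List PTree} (hP : P ≠ [])
    (hh : ∀ T ∈ P, IsHierarchy X T) (hm : X.card ≤ m) (hn : X.card ≤ n) :
    adamsAux m X P = adamsAux n X P := by
  have h1 := adamsAux_fuel_add (m - X.card) X.card X P hP hh le_rfl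
  have h2 := adamsAux_fuel_add (n - X.card) X.card X P hP hh le_rfl
  rw [show X.card + (m - X.card) = m by omega] at h1
  rw [show X.card + (n - X.card) = n by omega] at h2
  rw [h1, h2]

/-! ### The main induction -/

lemma adamsAux_restrict : ∀ (n : ℕ) (X : Finset ℕ) (P : List PTree), P ≠ [] →
    (∀ T ∈ P, IsHierarchy X T) → X.card ≤ n → ∀ Y, (∀ T ∈ P, Y ∈ T) →
    Y ∈ adamsAux n X P ∧
      restrictT (adamsAux n X P) Y = adamsAux n Y (P.map (fun T => restrictT T Y)) := by
  intro n
  induction n with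
  | zero =>
    intro X P hP hh hcard Y hY
    obtain ⟨T₀, Ps, rfl⟩ := List.exists_cons_of_ne_nil hP
    have hXne : X.Nonempty := (hh T₀ (List.mem_cons_self)).X_nonempty
    have h0 := hXne.card_pos
    exact absurd hcard (by omega)
  | succ n ih =>
    intro X P hP hh hcard Y hY
    obtain ⟨T₀, Ps, hPe⟩ := List.exists_cons_of_ne_nil hP
    have hT₀P : T₀ ∈ P := hPe ▸ List.mem_cons_self
    have hYX : Y ⊆ X := (hh T₀ hT₀P).subset_top Y (hY T₀ hT₀P)
    have hYne : Y.Nonempty := (hh T₀ hT₀P).cluster_nonempty Y (hY T₀ hT₀P)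
    by_cases hYeq : Y = X
    · subst hYeq
      have hmapP : P.map (fun T => restrictT T Y) = P := by
        have h1 : P.map (fun T => restrictT T Y) = P.map id :=
          List.map_congr_left
            (fun T hT => restrict_self ((hh T hT).subset_top) ((hh T hT).cluster_nonempty))
        rw [h1, List.map_id]
      constructor
      · exact top_mem_adamsAux _ _ _
      · rw [hmapP]
        exact restrict_self (fun C hC => (adamsAux_mem_subset _ _ _ hP hh C hC).1)
          (fun C hC => (adamsAux_mem_subset _ _ _ hP hh C hC).2)
    · -- Y ⊂ X
      -- every block of the top partition meeting Y contains Y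
      have hsup : ∀ A ∈ meetAll (P.map (maxProper X)), (A ∩ Y).Nonempty → Y ⊆ A := by
        subst hPe
        intro A hA hAY
        have hA' : A ∈ (Ps.map (maxProper X)).foldl meet2 (maxProper X T₀) := hA
        refine foldl_meet2_superset _ _ Y ?_ ?_ A hA' hAY
        · intro C hC hne
          exact maxProper_superset (hh T₀ (List.mem_cons_self))
            (hY T₀ (List.mem_cons_self)) hYeq hC hne
        · intro π' hπ' C hC hne
          obtain ⟨T, hT, rfl⟩ := List.mem_map.1 hπ'
          exact maxProper_superset (hh T (List.mem_cons_of_mem _ hT))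
            (hY T (List.mem_cons_of_mem _ hT)) hYeq hC hne
      -- there is a block containing Y
      have hex : ∃ A ∈ blocksOf X P, Y ⊆ A := by
        subst hPe
        have hfold : ∃ B ∈ (Ps.map (maxProper X)).foldl meet2 (maxProper X T₀), Y ⊆ B := by
          refine foldl_meet2_exists _ _ Y hYne ?_ ?_
          · exact exists_maxProper_supset (hh T₀ (List.mem_cons_self))
              (hY T₀ (List.mem_cons_self)) hYeq
          · intro π' hπ'
            obtain ⟨T, hT, rfl⟩ := List.mem_map.1 hπ'
            exact exists_maxProper_supset (hh T (List.mem_cons_of_mem _ hT))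
              (hY T (List.mem_cons_of_mem _ hT)) hYeq
        obtain ⟨B, hB, hYB⟩ := hfold
        obtain ⟨C, hC, hBC⟩ := foldl_meet2_head _ _ B hB
        have hCX : C ⊂ X := by
          obtain ⟨hCT, hCX, _⟩ := mem_maxProper.1 hC
          exact Finset.ssubset_iff_subset_ne.2
            ⟨(hh T₀ (List.mem_cons_self)).subset_top C hCT, hCX⟩
        exact ⟨B, Finset.mem_filter.2 ⟨hB, lt_of_le_of_lt hBC hCX⟩, hYB⟩
      -- data for each block containing Y
      have hblock : ∀ A ∈ blocksOf X P, Y ⊆ A →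
          (Y ∈ adamsAux n A (P.map (fun T => restrictT T A)) ∧
            restrictT (adamsAux n A (P.map (fun T => restrictT T A))) Y =
              adamsAux n Y (P.map (fun T => restrictT T Y))) := by
        intro A hA hYA
        have hAX : A ⊂ X := blocks_ssubset hA
        have hAne : A.Nonempty := blocks_nonempty hP hh hA
        have hcA : A.card ≤ n := by
          have := Finset.card_lt_card hAX
          omega
        have hYmem : ∀ T' ∈ P.map (fun T => restrictT T A), Y ∈ T' := by
          intro T' hT'
          obtain ⟨T, hT, rfl⟩ := List.mem_map.1 hT'
          exact mem_restrictT.2 ⟨⟨Y, hY T hT, Finset.inter_eq_left.2 hYA⟩, hYne⟩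
        have h := ih A (P.map (fun T => restrictT T A)) (by simp [hP])
          (hierarchies_restrict hh hAX.subset hAne) hcA Y hYmem
        have hcomp : (P.map (fun T => restrictT T A)).map (fun T => restrictT T Y) =
            P.map (fun T => restrictT T Y) := by
          rw [List.map_map]
          exact List.map_congr_left (fun T _ => restrict_restrict hYA)
        rw [hcomp] at h
        exact ⟨h.1, h.2⟩
      obtain ⟨A₀, hA₀, hYA₀⟩ := hex
      constructor
      · rw [adamsAux_succ, Finset.mem_insert]
        exact Or.inr (Finset.mem_biUnion.2 ⟨A₀, hA₀, (hblock A₀ hA₀ hYA₀).1⟩)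
      · rw [adamsAux_succ, restrict_insert (by rwa [Finset.inter_eq_right.2 hYX]),
          Finset.inter_eq_right.2 hYX, restrict_biUnion]
        have hPYne : P.map (fun T => restrictT T Y) ≠ [] := by simp [hP]
        have hPYh : ∀ T' ∈ P.map (fun T => restrictT T Y), IsHierarchy Y T' :=
          hierarchies_restrict hh hYX hYne
        have hcY : Y.card ≤ n := by
          have h1 := Finset.card_lt_card (Finset.ssubset_iff_subset_ne.2 ⟨hYX, hYeq⟩)
          omega
        have hfuel : adamsAux n Y (P.map (fun T => restrictT T Y)) =
            adamsAux (n + 1) Y (P.map (fun T => restrictT T Y)) :=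
          adamsAux_fuel_succ n Y _ hPYne hPYh hcY
        rw [← hfuel]
        apply Finset.Subset.antisymm
        · intro D hD
          rcases Finset.mem_insert.1 hD with rfl | hD
          · exact top_mem_adamsAux _ _ _
          · obtain ⟨A, hA, hD⟩ := Finset.mem_biUnion.1 hD
            by_cases hAY : (A ∩ Y).Nonempty
            · have hYA : Y ⊆ A := hsup A (Finset.mem_filter.1 hA).1 hAY
              rwa [(hblock A hA hYA).2] at hD
            · rw [restrict_eq_empty] at hD
              · exact absurd hD (Finset.notMem_empty D)
              · intro C hC
                have hCA : C ⊆ A := (adamsAux_mem_subset n A _ (by simp [hP])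
                  (hierarchies_restrict hh (blocks_ssubset hA).subset
                    (blocks_nonempty hP hh hA)) C hC).1
                rw [Finset.not_nonempty_iff_eq_empty] at hAY
                exact Finset.subset_empty.1 (hAY ▸ Finset.inter_subset_inter hCA subset_rfl)
        · intro D hD
          refine Finset.mem_insert.2 (Or.inr (Finset.mem_biUnion.2 ⟨A₀, hA₀, ?_⟩))
          rwa [(hblock A₀ hA₀ hYA₀).2]

end AdamsAux

/-- If `Y` is a cluster of every tree of the profile, then `Y` is a cluster of
the Adams consensus, and Adams consensus commutes with restriction to `Y`. -/
theorem adams_extension_stable_clusters_II (X : Finset ℕ) (P : List PTree)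
    (hP : P ≠ []) (hh : ∀ T ∈ P, IsHierarchy X T)
    (Y : Finset ℕ) (hY : ∀ T ∈ P, Y ∈ T) :
    Y ∈ adams X P ∧
      restrictT (adams X P) Y = adams Y (P.map (fun T => restrictT T Y)) := by
  have hT0 : ∃ T₀, T₀ ∈ P := by
    obtain ⟨T₀, Ps, rfl⟩ := List.exists_cons_of_ne_nil hP
    exact ⟨T₀, List.mem_cons_self⟩
  obtain ⟨T₀, hT₀⟩ := hT0
  have hYX : Y ⊆ X := (hh T₀ hT₀).subset_top Y (hY T₀ hT₀)
  have hYne : Y.Nonempty := (hh T₀ hT₀).cluster_nonempty Y (hY T₀ hT₀)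
  have h := adamsAux_restrict X.card X P hP hh le_rfl Y hY
  refine ⟨h.1, ?_⟩
  rw [show adams X P = adamsAux X.card X P from rfl, h.2]
  have hPYne : P.map (fun T => restrictT T Y) ≠ [] := by simp [hP]
  have hPYh : ∀ T' ∈ P.map (fun T => restrictT T Y), IsHierarchy Y T' :=
    hierarchies_restrict hh hYX hYne
  exact adamsAux_fuel_eq hPYne hPYh (Finset.card_le_card hYX) le_rfl
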